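/- Let a > 0, D > 0, d ≥ 2, and let f(x) = ∏_{k=1}^d (x − x_k) be a monic real polynomial of degree d with d real roots whose discriminant ∏_{1≤j<k≤d}(x_j − x_k)² equals D. Then |f(ai)| ≥ (2a)^(d/2) · d^(−d/(2d−2)) · D^(1/(2d−2)). -/

import Mathlib

open Real Finset
open scoped ComplexOrder Matrix ComplexConjugate

/-!
Put `v k = a i - x k`. The Cayley-type points `z k = v k / conj (v k)` lie on the unit circle and
satisfy `|z j - z i| |v i| |v j| = 2a |x i - x j|`, so the Vandermonde determinant of the `z k`
has squared modulus `(2a)^(d(d-1)) D / |f(ai)|^(2(d-1))`. A Hadamard-type bound (AM-GM on the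
eigenvalues of `V Vᴴ`) caps that squared modulus by `d^d`; taking `2(d-1)`-th roots gives the claim.
-/

theorem Finset.prod_le_sum_div_card_pow {ι : Type*} (s : Finset ι) {f : ι → ℝ}
    (hf : ∀ i ∈ s, 0 ≤ f i) : ∏ i ∈ s, f i ≤ ((∑ i ∈ s, f i) / #s) ^ #s := by
  rcases s.eq_empty_or_nonempty with rfl | hs
  · simp
  have hcard : (0 : ℝ) < #s := by exact_mod_cast hs.card_pos
  have hamgm := geom_mean_le_arith_mean_weighted s (fun _ ↦ 1 / (#s : ℝ)) f
    (fun _ _ ↦ by positivity) (by simp [hcard.ne']) hf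
  rw [← mul_sum, one_div_mul_eq_div] at hamgm
  calc ∏ i ∈ s, f i = (∏ i ∈ s, f i ^ (1 / (#s : ℝ))) ^ #s := by
        rw [← prod_pow]
        refine prod_congr rfl fun i hi ↦ ?_
        rw [← rpow_mul_natCast (hf i hi), one_div_mul_cancel hcard.ne', rpow_one]
    _ ≤ ((∑ i ∈ s, f i) / #s) ^ #s :=
        pow_le_pow_left₀ (prod_nonneg fun i hi ↦ rpow_nonneg (hf i hi) _) hamgm _

theorem Matrix.normSq_det_le {ι : Type*} [Fintype ι] [DecidableEq ι] (N : Matrix ι ι ℂ) :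
    Complex.normSq N.det ≤
      ((∑ i, ∑ j, Complex.normSq (N i j)) / Fintype.card ι) ^ Fintype.card ι := by
  have hG : (N * Nᴴ).PosSemidef := Matrix.posSemidef_self_mul_conjTranspose N
  have hdet : Complex.normSq N.det = ∏ i, hG.1.eigenvalues i := by
    have hGdet : (N * Nᴴ).det = Complex.normSq N.det := by
      rw [Matrix.det_mul, Matrix.det_conjTranspose, Complex.star_def, Complex.mul_conj]
    have := hG.1.det_eq_prod_eigenvalues
    rw [hGdet, ← RCLike.ofReal_prod] at this
    exact RCLike.ofReal_inj.mp this
  have htrace : ∑ i, ∑ j, Complex.normSq (N i j) = ∑ i, hG.1.eigenvalues i := by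
    have := hG.1.trace_eq_sum_eigenvalues
    simp only [Matrix.trace, Matrix.diag_apply, Matrix.mul_apply, Matrix.conjTranspose_apply,
      Complex.star_def, Complex.mul_conj, ← Complex.ofReal_sum, ← RCLike.ofReal_sum] at this
    exact RCLike.ofReal_inj.mp this
  rw [hdet, htrace]
  exact prod_le_sum_div_card_pow _ fun i _ ↦ hG.eigenvalues_nonneg i

theorem Matrix.normSq_det_vandermonde_le {n : ℕ} {z : Fin n → ℂ} (hz : ∀ i, ‖z i‖ ≤ 1) :
    Complex.normSq (Matrix.vandermonde z).det ≤ (n : ℝ) ^ n := by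
  have hrow : ∀ i, ∑ j : Fin n, Complex.normSq (z i ^ (j : ℕ)) ≤ n := fun i ↦ by
    calc ∑ j : Fin n, Complex.normSq (z i ^ (j : ℕ)) ≤ ∑ _j : Fin n, (1 : ℝ) := by
          refine sum_le_sum fun j _ ↦ ?_
          rw [← Complex.sq_norm, norm_pow]
          exact pow_le_one₀ (by positivity) (pow_le_one₀ (norm_nonneg _) (hz i))
      _ = n := by simp
  refine (Matrix.normSq_det_le _).trans ?_
  rw [Fintype.card_fin]
  refine pow_le_pow_left₀ (div_nonneg (sum_nonneg fun i _ ↦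
    sum_nonneg fun j _ ↦ Complex.normSq_nonneg _) n.cast_nonneg) ?_ _
  refine div_le_of_le_mul₀ (by positivity) (by positivity) ?_
  simpa [Matrix.vandermonde] using sum_le_sum fun i (_ : i ∈ univ) ↦ hrow i

theorem Fin.prod_filter_lt_eq_prod_prod_Ioi {M : Type*} [CommMonoid M] {n : ℕ}
    (f : Fin n × Fin n → M) :
    ∏ p ∈ univ.filter (fun p : Fin n × Fin n ↦ p.1 < p.2), f p = ∏ i, ∏ j ∈ Ioi i, f (i, j) := by
  rw [prod_sigma']
  exact prod_nbij' (fun p ↦ ⟨p.1, p.2⟩) (fun p ↦ (p.1, p.2)) (by simp) (by simp) (by simp)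
    (by simp) (by simp)

theorem Fin.prod_prod_Ioi_mul_eq_prod_pow {M : Type*} [CommMonoid M] {n : ℕ} (g : Fin n → M) :
    ∏ i, ∏ j ∈ Ioi i, (g i * g j) = ∏ k, g k ^ (n - 1) := by
  have hleft : ∏ i, ∏ _j ∈ Ioi i, g i = ∏ i : Fin n, g i ^ (n - 1 - i) := by
    refine prod_congr rfl fun i _ ↦ ?_
    rw [Finset.prod_const, Fin.card_Ioi]
  have hright : ∏ i, ∏ j ∈ Ioi i, g j = ∏ j : Fin n, g j ^ (j : ℕ) := by
    rw [prod_comm' (t' := univ) (s' := fun j ↦ Iio j) (by simp)]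
    refine prod_congr rfl fun j _ ↦ ?_
    rw [Finset.prod_const, Fin.card_Iio]
  rw [prod_congr rfl fun i _ ↦ prod_mul_distrib, prod_mul_distrib, hleft, hright,
    ← prod_mul_distrib]
  refine prod_congr rfl fun i _ ↦ ?_
  rw [← pow_add]
  have := i.isLt
  congr 1
  omega

theorem Complex.normSq_div_conj_sub_div_conj_mul (u v : ℂ) :
    normSq (v / conj v - u / conj u) * (normSq u * normSq v) =
      normSq (u * conj v - v * conj u) := by
  rcases eq_or_ne u 0 with rfl | hu
  · simp
  rcases eq_or_ne v 0 with rfl | hv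
  · simp
  have hu' : conj u ≠ 0 := by simpa
  have hv' : conj v ≠ 0 := by simpa
  have hdiff : v / conj v - u / conj u = -(u * conj v - v * conj u) / (conj u * conj v) := by
    field_simp
    ring
  rw [hdiff, map_div₀, normSq_neg, map_mul, normSq_conj, normSq_conj,
    div_mul_cancel₀ _ (by simp [hu, hv])]

theorem pow_mul_discr_le_norm_prod_pow (a : ℝ) {n : ℕ} (x : Fin n → ℝ) :
    (2 * a) ^ (n * (n - 1)) *
        ∏ p ∈ univ.filter (fun p : Fin n × Fin n ↦ p.1 < p.2), (x p.1 - x p.2) ^ 2 ≤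
      n ^ n * ‖∏ k, ((a : ℂ) * Complex.I - x k)‖ ^ (2 * (n - 1)) := by
  set v : Fin n → ℂ := fun k ↦ a * Complex.I - x k
  set z : Fin n → ℂ := fun k ↦ v k / conj (v k)
  have hz : ∀ k, ‖z k‖ ≤ 1 := fun k ↦ by
    simpa only [z, norm_div, Complex.norm_conj] using div_self_le_one ‖v k‖
  have hpair : ∀ i j, Complex.normSq (z j - z i) * (Complex.normSq (v i) * Complex.normSq (v j)) =
      (2 * a * (2 * a)) * (x i - x j) ^ 2 := fun i j ↦ by
    have hcross :
        v i * conj (v j) - v j * conj (v i) = ((2 * a * (x i - x j) : ℝ) : ℂ) * Complex.I := by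
      simp only [v, map_sub, map_mul, Complex.conj_ofReal, Complex.conj_I]
      push_cast
      ring
    rw [Complex.normSq_div_conj_sub_div_conj_mul, hcross, Complex.normSq_mul, Complex.normSq_I,
      Complex.normSq_ofReal]
    ring
  have hnorm : ‖∏ k, v k‖ ^ (2 * (n - 1)) =
      ∏ i, ∏ j ∈ Ioi i, (Complex.normSq (v i) * Complex.normSq (v j)) := by
    rw [Fin.prod_prod_Ioi_mul_eq_prod_pow, prod_pow, pow_mul, Complex.sq_norm, map_prod]
  have hident : Complex.normSq (Matrix.vandermonde z).det * ‖∏ k, v k‖ ^ (2 * (n - 1)) =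
      (2 * a) ^ (n * (n - 1)) *
        ∏ p ∈ univ.filter (fun p : Fin n × Fin n ↦ p.1 < p.2), (x p.1 - x p.2) ^ 2 := by
    have hconst : ∏ i : Fin n, ∏ _j ∈ Ioi i, (2 * a * (2 * a)) = (2 * a) ^ (n * (n - 1)) := by
      rw [Fin.prod_prod_Ioi_mul_eq_prod_pow (fun _ ↦ 2 * a), Finset.prod_const, card_univ,
        Fintype.card_fin, ← pow_mul, Nat.mul_comm]
    rw [Matrix.det_vandermonde, hnorm, Fin.prod_filter_lt_eq_prod_prod_Ioi, ← hconst]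
    simp only [map_prod, ← prod_mul_distrib, hpair]
  rw [← hident]
  exact mul_le_mul_of_nonneg_right (Matrix.normSq_det_vandermonde_le hz) (by positivity)

theorem rpow_mul_rpow_mul_rpow_le_of_pow_mul_le {n : ℕ} (hn : 2 ≤ n) {b D N : ℝ} (hb : 0 ≤ b)
    (hD : 0 ≤ D) (hN : 0 ≤ N) (h : b ^ (n * (n - 1)) * D ≤ n ^ n * N ^ (2 * (n - 1))) :
    b ^ ((n : ℝ) / 2) * (n : ℝ) ^ (-(n : ℝ) / (2 * n - 2)) * D ^ ((1 : ℝ) / (2 * n - 2)) ≤ N := by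
  have hm : ((2 * (n - 1) : ℕ) : ℝ) = 2 * n - 2 := by
    rw [Nat.cast_mul, Nat.cast_sub (by omega)]
    ring
  have hm0 : (2 * n - 2 : ℝ) ≠ 0 := by
    rw [← hm]
    exact_mod_cast (by omega : 2 * (n - 1) ≠ 0)
  have hnpos : (0 : ℝ) < n := by exact_mod_cast (by omega : 0 < n)
  refine le_of_pow_le_pow_left₀ (by omega : 2 * (n - 1) ≠ 0) hN ?_
  have hbpow : (b ^ ((n : ℝ) / 2)) ^ (2 * (n - 1)) = b ^ (n * (n - 1)) := by
    rw [← rpow_mul_natCast hb, ← rpow_natCast, hm]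
    congr 1
    rw [Nat.cast_mul, Nat.cast_sub (by omega)]
    ring
  have hnpow : ((n : ℝ) ^ (-(n : ℝ) / (2 * n - 2))) ^ (2 * (n - 1)) = ((n : ℝ) ^ n)⁻¹ := by
    rw [← rpow_mul_natCast hnpos.le, hm, div_mul_cancel₀ _ hm0, rpow_neg hnpos.le, rpow_natCast]
  have hDpow : (D ^ ((1 : ℝ) / (2 * n - 2))) ^ (2 * (n - 1)) = D := by
    rw [← rpow_mul_natCast hD, hm, div_mul_cancel₀ _ hm0, rpow_one]
  rw [mul_pow, mul_pow, hbpow, hnpow, hDpow, mul_right_comm, ← div_eq_mul_inv,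
    div_le_iff₀' (by positivity)]
  exact h

theorem abs_at_ai_ge_general (d : ℕ) (hd : 2 ≤ d) (a D : ℝ) (ha : 0 < a)
    (x : Fin d → ℝ)
    (hdisc : ∏ p ∈ Finset.univ.filter (fun p : Fin d × Fin d => p.1 < p.2),
        (x p.1 - x p.2) ^ 2 = D) :
    ‖∏ k, ((a : ℂ) * Complex.I - (x k : ℂ))‖ ≥
      (2 * a) ^ ((d : ℝ) / 2) * (d : ℝ) ^ (-(d : ℝ) / (2 * d - 2)) *
        D ^ ((1 : ℝ) / (2 * d - 2)) := by
  have hD : 0 ≤ D := hdisc ▸ prod_nonneg fun _ _ ↦ sq_nonneg _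
  exact rpow_mul_rpow_mul_rpow_le_of_pow_mul_le hd (by positivity) hD (norm_nonneg _)
    (hdisc ▸ pow_mul_discr_le_norm_prod_pow a x)

theorem abs_at_ai_ge (d : ℕ) (hd : 2 ≤ d) (a D : ℝ) (ha : 0 < a) (hD : 0 < D)
    (x : Fin d → ℝ)
    (hdisc : ∏ p ∈ Finset.univ.filter (fun p : Fin d × Fin d => p.1 < p.2),
        (x p.1 - x p.2) ^ 2 = D) :
    ‖∏ k, ((a : ℂ) * Complex.I - (x k : ℂ))‖ ≥
      (2 * a) ^ ((d : ℝ) / 2) * (d : ℝ) ^ (-(d : ℝ) / (2 * d - 2)) *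
        D ^ ((1 : ℝ) / (2 * d - 2)) :=
  abs_at_ai_ge_general d hd a D ha x hdisc
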